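/- For every integer n > 0 and i ∈ {1,2,3}, defining g(m) = bc(1 − 2b/m)(1 − 2c/m)/(2m²) with b = ⌊m/4⌋ and c = ⌊(m+2)/4⌋, one has g(4k + i + 4) ≥ g(4k + i) for all integers k > 0; consequently g(N) ≥ 1/162 for all N ≥ 4. -/

import Mathlib

/-!
With `b = ⌊m/4⌋` and `c = ⌊(m+2)/4⌋`, the identity `8b(m - 2b) = m² - (m - 4b)²` turns `g`
into `g(m) = (1 - r²/m²)(1 - s²/m²)/128`, where `r = m - 4b = m mod 4` and
`s = m - 4c = (m+2) mod 4 - 2`.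
As `r` and `s` depend only on `m mod 4` and satisfy `|r|, |s| ≤ m`, we get `g(m) ≤ g(m + 4)` for
every `m > 0`, hence `g(N) ≥ min(g 4, g 5, g 6, g 7) = g 6 = 1/162` for `N ≥ 4`.
-/

/-- `g(m) = b·c·(1 − 2b/m)(1 − 2c/m)/(2m²)` with `b = ⌊m/4⌋` and `c = ⌊(m+2)/4⌋`. -/
noncomputable def solenoidG (m : ℕ) : ℝ :=
  ((m / 4 : ℕ) : ℝ) * (((m + 2) / 4 : ℕ) : ℝ) *
      (1 - 2 * ((m / 4 : ℕ) : ℝ) / (m : ℝ)) * (1 - 2 * (((m + 2) / 4 : ℕ) : ℝ) / (m : ℝ)) /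
    (2 * (m : ℝ) ^ 2)

lemma solenoidG_eq_residues {m : ℕ} (hm : 0 < m) :
    solenoidG m = (1 - ((m % 4 : ℕ) : ℝ) ^ 2 / (m : ℝ) ^ 2) *
      (1 - (((m + 2) % 4 : ℕ) - 2 : ℝ) ^ 2 / (m : ℝ) ^ 2) / 128 := by
  have hm' : (m : ℝ) ≠ 0 := by positivity
  have hr : ((m % 4 : ℕ) : ℝ) = m - 4 * ((m / 4 : ℕ) : ℝ) := by
    rw [eq_sub_iff_add_eq']; exact_mod_cast Nat.div_add_mod m 4
  have hs : (((m + 2) % 4 : ℕ) : ℝ) = m + 2 - 4 * (((m + 2) / 4 : ℕ) : ℝ) := by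
    rw [eq_sub_iff_add_eq']; exact_mod_cast Nat.div_add_mod (m + 2) 4
  rw [solenoidG, hr, hs]
  field_simp
  ring

lemma one_sub_sq_div_sq_nonneg {d x : ℝ} (h : d ^ 2 ≤ x ^ 2) : 0 ≤ 1 - d ^ 2 / x ^ 2 :=
  sub_nonneg.2 (div_le_one_of_le₀ h (sq_nonneg x))

lemma one_sub_sq_div_sq_le {d x y : ℝ} (hx : 0 < x) (hxy : x ≤ y) :
    1 - d ^ 2 / x ^ 2 ≤ 1 - d ^ 2 / y ^ 2 := by
  gcongr

lemma solenoidG_le_add_four {m : ℕ} (hm : 0 < m) : solenoidG m ≤ solenoidG (m + 4) := by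
  have hr : ((m % 4 : ℕ) : ℝ) ^ 2 ≤ (m : ℝ) ^ 2 := by
    gcongr; exact Nat.mod_le m 4
  have hs : (((m + 2) % 4 : ℕ) - 2 : ℝ) ^ 2 ≤ (m : ℝ) ^ 2 := by
    have h₁ : (2 : ℝ) ≤ ((m + 2) % 4 : ℕ) + m := by
      exact_mod_cast (by omega : 2 ≤ (m + 2) % 4 + m)
    have h₂ : (((m + 2) % 4 : ℕ) : ℝ) ≤ m + 2 := by exact_mod_cast Nat.mod_le (m + 2) 4
    exact sq_le_sq' (by linarith) (by linarith)
  have hm' : (0 : ℝ) < m := by exact_mod_cast hm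
  rw [solenoidG_eq_residues hm, solenoidG_eq_residues (by omega), Nat.add_mod_right,
    show (m + 4 + 2) % 4 = (m + 2) % 4 by omega]
  push_cast
  have hm4 : (m : ℝ) ≤ m + 4 := by linarith
  have hr_le := one_sub_sq_div_sq_le (d := ((m % 4 : ℕ) : ℝ)) hm' hm4
  exact div_le_div_of_nonneg_right (mul_le_mul hr_le (one_sub_sq_div_sq_le hm' hm4)
    (one_sub_sq_div_sq_nonneg hs) ((one_sub_sq_div_sq_nonneg hr).trans hr_le)) (by norm_num)

lemma solenoidG_le_add_mul_four {m : ℕ} (hm : 0 < m) (j : ℕ) :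
    solenoidG m ≤ solenoidG (m + 4 * j) := by
  induction j with
  | zero => simp
  | succ j ih => exact ih.trans (solenoidG_le_add_four (by omega))

lemma one_div_162_le_solenoidG_four_add {r : ℕ} (hr : r < 4) : 1 / 162 ≤ solenoidG (4 + r) := by
  interval_cases r <;> norm_num [solenoidG]

/-- For every `i ∈ {1,2,3}` one has `g(4k + i + 4) ≥ g(4k + i)` for all
integers `k > 0`; consequently `g(N) ≥ 1/162` for all `N ≥ 4`. -/
theorem solenoidG_bounds :
    (∀ i ∈ ({1, 2, 3} : Finset ℕ), ∀ k : ℕ, 0 < k →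
      solenoidG (4 * k + i) ≤ solenoidG (4 * k + i + 4)) ∧
    (∀ N : ℕ, 4 ≤ N → 1 / 162 ≤ solenoidG N) := by
  refine ⟨fun i _ k hk ↦ solenoidG_le_add_four (by omega), fun N hN ↦ ?_⟩
  have hN' : N = 4 + N % 4 + 4 * (N / 4 - 1) := by omega
  rw [hN']
  exact (one_div_162_le_solenoidG_four_add (Nat.mod_lt N (by norm_num))).trans
    (solenoidG_le_add_mul_four (by omega) _)
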